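/- Let u ∈ Z¹(PSL(2,ℤ), N) be a 1-cocycle with u(σ) = 1. Then for every a ∈ ℙ¹(ℚ) the restriction of u to the stabilizer Stab(a) of a in PSL(2,ℤ) is trivial (i.e. there exists n ∈ N with u(k) = n⁻¹·(k•n) for all k ∈ Stab(a)) if and only if there exists n ∈ N with σ•u(τ) = n⁻¹·((στ)•n). -/

import Mathlib

/-- A 1-cocycle of `G` in a (possibly noncommutative) group `N` on which `G`
acts on the left by group automorphisms: `u (g₁ * g₂) = u g₁ * g₁ • u g₂`. -/
def IsCocycle {G N : Type*} [Group G] [Group N] [MulDistribMulAction G N]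
    (u : G → N) : Prop :=
  ∀ g₁ g₂ : G, u (g₁ * g₂) = u g₁ * g₁ • u g₂

/-- Two maps `u v : G → N` are cohomologous if there is `n : N` with
`v g = n⁻¹ * u g * g • n` for all `g`. -/
def Cohomologous {G N : Type*} [Group G] [Group N] [MulDistribMulAction G N]
    (u v : G → N) : Prop :=
  ∃ n : N, ∀ g : G, v g = n⁻¹ * u g * g • n

/-- The group `SL(2,ℤ)`. -/
abbrev SL2Z := Matrix.SpecialLinearGroup (Fin 2) ℤ

/-- The group `PSL(2,ℤ)`, the quotient of `SL(2,ℤ)` by its center `{±1}`. -/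
abbrev PSL2Z := SL2Z ⧸ Subgroup.center SL2Z

/-- The image `σ` of the matrix `((0,-1),(1,0))` in `PSL(2,ℤ)`. -/
def pslSigma : PSL2Z :=
  QuotientGroup.mk ⟨!![0, -1; 1, 0], by norm_num [Matrix.det_fin_two_of]⟩

/-- The image `τ` of the matrix `((0,-1),(1,-1))` in `PSL(2,ℤ)`. -/
def pslTau : PSL2Z :=
  QuotientGroup.mk ⟨!![0, -1; 1, -1], by norm_num [Matrix.det_fin_two_of]⟩

/-- The projective line `ℙ¹(ℚ) = ℚ ∪ {∞}`, realized as the projectivization of `ℚ²`. -/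
abbrev P1Q := Projectivization ℚ (Fin 2 → ℚ)

/-- The linear automorphism of `ℚ²` attached to an element of `SL(2,ℤ)`. -/
noncomputable def sl2ToLin : SL2Z →* (Fin 2 → ℚ) ≃ₗ[ℚ] (Fin 2 → ℚ) :=
  (Matrix.SpecialLinearGroup.toLin').comp
    (Matrix.SpecialLinearGroup.map (Int.castRingHom ℚ))

/-- The linear action of `SL(2,ℤ)` on the projective line (which is the Möbius
action in the affine coordinate `z = x/y`). -/
noncomputable instance instSL2ZP1Q : MulAction SL2Z P1Q where
  smul g x := Projectivization.map (sl2ToLin g).toLinearMap (sl2ToLin g).injective x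
  one_smul x := by
    induction x using Projectivization.ind with
    | h v hv =>
      show Projectivization.map _ _ _ = _
      rw [Projectivization.map_mk]
      have h1 : (sl2ToLin 1).toLinearMap v = v := by simp
      exact (Projectivization.mk_eq_mk_iff ℚ _ _ _ hv).2 ⟨1, by simp [h1]⟩
  mul_smul g h x := by
    induction x using Projectivization.ind with
    | h v hv =>
      show Projectivization.map _ _ _ =
        Projectivization.map _ _ (Projectivization.map _ _ _)
      rw [Projectivization.map_mk, Projectivization.map_mk, Projectivization.map_mk]
      have h1 : (sl2ToLin (g * h)).toLinearMap v
          = (sl2ToLin g).toLinearMap ((sl2ToLin h).toLinearMap v) := by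
        simp [map_mul]
      exact (Projectivization.mk_eq_mk_iff ℚ _ _ _ _).2 ⟨1, by simp [h1]⟩

lemma center_smul_triv (z : SL2Z) (hz : z ∈ Subgroup.center SL2Z) (x : P1Q) :
    z • x = x := by
  obtain ⟨r, hr2, hrz⟩ := Matrix.SpecialLinearGroup.mem_center_iff.mp hz
  rw [Fintype.card_fin] at hr2
  have hrr : (r : ℚ) * (r : ℚ) = 1 := by
    have := congrArg (fun t : ℤ => (t : ℚ)) hr2
    push_cast at this
    nlinarith [this]
  induction x using Projectivization.ind with
  | h v hv =>
    show Projectivization.map _ _ _ = _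
    rw [Projectivization.map_mk]
    have hval : (sl2ToLin z).toLinearMap v = (r : ℚ) • v := by
      show (sl2ToLin z) v = _
      have hmat : (z : Matrix (Fin 2) (Fin 2) ℤ) = Matrix.scalar (Fin 2) r := hrz.symm
      simp only [sl2ToLin, MonoidHom.comp_apply,
        Matrix.SpecialLinearGroup.toLin'_apply, Matrix.toLin'_apply,
        Matrix.SpecialLinearGroup.map_apply_coe, hmat]
      rw [Matrix.scalar_apply]
      ext i
      simp [Matrix.mulVec, dotProduct, Matrix.diagonal, RingHom.mapMatrix_apply,
        Fin.sum_univ_two]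
      try (fin_cases i <;> simp)
    exact (Projectivization.mk_eq_mk_iff ℚ _ _ _ hv).2
      ⟨⟨(r : ℚ), (r : ℚ), hrr, hrr⟩, by rw [Units.smul_def]; exact hval.symm⟩

/-- The Möbius action of `PSL(2,ℤ)` on the projective line `ℙ¹(ℚ)`. -/
noncomputable instance instPSL2ZP1Q : MulAction PSL2Z P1Q where
  smul g x := Quotient.liftOn' g (fun s : SL2Z => s • x)
    (fun a b hab => by
      have h : a⁻¹ * b ∈ Subgroup.center SL2Z := QuotientGroup.leftRel_apply.mp hab
      calc a • x = a • ((a⁻¹ * b) • x) := by rw [center_smul_triv _ h]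
        _ = (a * (a⁻¹ * b)) • x := (mul_smul _ _ _).symm
        _ = b • x := by rw [mul_inv_cancel_left])
  one_smul x := one_smul SL2Z x
  mul_smul g h x := by
    refine QuotientGroup.induction_on g (fun a => QuotientGroup.induction_on h (fun b => ?_))
    show (a * b) • x = a • (b • x)
    exact mul_smul a b x

open Matrix ModularGroup Projectivization

lemma ptInf_ne : (![1,0] : Fin 2 → ℚ) ≠ 0 := by
  intro h; simpa using congrFun h 0

noncomputable def ptInf : P1Q := Projectivization.mk ℚ ![1,0] ptInf_ne

lemma sl2ToLin_apply (g : SL2Z) (v : Fin 2 → ℚ) :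
    sl2ToLin g v = (g.1.map (Int.cast : ℤ → ℚ)).mulVec v := by
  simp [sl2ToLin, Matrix.SpecialLinearGroup.toLin'_apply]

lemma psl_smul_mk (g : SL2Z) (v : Fin 2 → ℚ) (hv : v ≠ 0) :
    (QuotientGroup.mk g : PSL2Z) • Projectivization.mk ℚ v hv =
    Projectivization.mk ℚ ((g.1.map (Int.cast : ℤ → ℚ)).mulVec v)
      (by rw [← sl2ToLin_apply]; exact (LinearEquiv.map_ne_zero_iff _).2 hv) := by
  have h0 : (QuotientGroup.mk g : PSL2Z) • Projectivization.mk ℚ v hv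
      = g • Projectivization.mk ℚ v hv := rfl
  rw [h0]
  show Projectivization.map (sl2ToLin g).toLinearMap (sl2ToLin g).injective _ = _
  rw [Projectivization.map_mk]
  simp only [LinearEquiv.coe_toLinearMap]
  congr 1

lemma psl_mk_eq_mk {A B : SL2Z} (h : A.1 = B.1 ∨ A.1 = -B.1) :
    (QuotientGroup.mk A : PSL2Z) = QuotientGroup.mk B := by
  rcases h with h | h
  · exact congrArg _ (Subtype.ext h)
  · rw [QuotientGroup.eq]
    refine Matrix.SpecialLinearGroup.mem_center_iff.2 ⟨-1, by norm_num, ?_⟩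
    have hB : B.1 = -A.1 := by rw [h, neg_neg]
    have : ((A⁻¹ * B : SL2Z) : Matrix (Fin 2) (Fin 2) ℤ) = A.1.adjugate * B.1 := by
      simp [Matrix.SpecialLinearGroup.coe_inv]
    rw [this, hB, Matrix.mul_neg, Matrix.adjugate_mul, A.2]
    simp [Matrix.scalar_apply]

lemma pslST : pslSigma * pslTau = QuotientGroup.mk (ModularGroup.T ^ (-1 : ℤ)) := by
  refine (QuotientGroup.mk_mul ..).symm.trans ?_
  refine psl_mk_eq_mk (Or.inr ?_)
  rw [ModularGroup.coe_T_zpow]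
  show (!![0, -1; 1, 0] : Matrix (Fin 2) (Fin 2) ℤ) * !![0, -1; 1, -1] = _
  norm_num [Matrix.mul_fin_two]

lemma st_smul_ptInf : (pslSigma * pslTau) • ptInf = ptInf := by
  rw [pslST, ptInf, psl_smul_mk]
  refine (Projectivization.mk_eq_mk_iff' ℚ _ _ _ _).2 ⟨1, ?_⟩
  rw [ModularGroup.coe_T_zpow]
  funext i
  fin_cases i <;>
    simp [Matrix.mulVec, dotProduct, Fin.sum_univ_two, Matrix.map_apply]

lemma stab_ptInf (k : PSL2Z) (hk : k • ptInf = ptInf) :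
    ∃ m : ℤ, k = (pslSigma * pslTau) ^ m := by
  induction k using QuotientGroup.induction_on with
  | H A =>
  rw [ptInf, psl_smul_mk] at hk
  obtain ⟨c, hc⟩ := (Projectivization.mk_eq_mk_iff' ℚ _ _ _ _).1 hk
  have hmv : (A.1.map (Int.cast : ℤ → ℚ)).mulVec ![1,0]
      = ![(A.1 0 0 : ℚ), (A.1 1 0 : ℚ)] := by
    funext i
    fin_cases i <;>
      simp [Matrix.mulVec, dotProduct, Fin.sum_univ_two, Matrix.map_apply]
  rw [hmv] at hc
  have h10 : A.1 1 0 = 0 := by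
    have := congrFun hc 1
    simp at this
    exact_mod_cast this.symm
  have hdet := A.2
  rw [Matrix.det_fin_two, h10, mul_zero, sub_zero] at hdet
  have hst : ∀ n : ℤ, (pslSigma * pslTau) ^ n
      = QuotientGroup.mk (ModularGroup.T ^ (-n)) := by
    intro n
    rw [pslST, ← QuotientGroup.mk_zpow, ← _root_.zpow_mul]
    norm_num
  rcases Int.mul_eq_one_iff_eq_one_or_neg_one.mp hdet with ⟨h00, h11⟩ | ⟨h00, h11⟩
  · refine ⟨-(A.1 0 1), ?_⟩
    rw [hst, neg_neg]
    refine psl_mk_eq_mk (Or.inl ?_)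
    rw [ModularGroup.coe_T_zpow]
    ext i j
    fin_cases i <;> fin_cases j <;> simp [h00, h10, h11]
  · refine ⟨A.1 0 1, ?_⟩
    rw [hst]
    refine psl_mk_eq_mk (Or.inr ?_)
    rw [ModularGroup.coe_T_zpow]
    ext i j
    fin_cases i <;> fin_cases j <;> simp [h00, h10, h11]

lemma exists_smul_ptInf (a : P1Q) : ∃ g : PSL2Z, g • ptInf = a := by
  induction a using Projectivization.ind with
  | h v hv =>
  set x := v 0 with hx
  set y := v 1 with hy
  set p' : ℤ := x.num * (y.den : ℤ) with hp'
  set q' : ℤ := y.num * (x.den : ℤ) with hq'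
  have hxden : ((x.den : ℚ)) ≠ 0 := by exact_mod_cast x.den_nz
  have hyden : ((y.den : ℚ)) ≠ 0 := by exact_mod_cast y.den_nz
  have hne : ¬(p' = 0 ∧ q' = 0) := by
    rintro ⟨h1, h2⟩
    apply hv
    have hx0 : x = 0 := by
      rcases mul_eq_zero.1 h1 with h | h
      · exact Rat.num_eq_zero.1 h
      · exact absurd h (by exact_mod_cast y.den_nz)
    have hy0 : y = 0 := by
      rcases mul_eq_zero.1 h2 with h | h
      · exact Rat.num_eq_zero.1 h
      · exact absurd h (by exact_mod_cast x.den_nz)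
    funext i
    fin_cases i <;> simp [← hx, ← hy, hx0, hy0]
  set D : ℤ := (Int.gcd p' q' : ℤ) with hD
  have hDpos : 0 < Int.gcd p' q' := by
    rcases Nat.eq_zero_or_pos (Int.gcd p' q') with h | h
    · exact absurd (Int.gcd_eq_zero_iff.1 h) hne
    · exact h
  have hDne : D ≠ 0 := by
    rw [hD]
    exact_mod_cast hDpos.ne'
  have hD0 : (D : ℚ) ≠ 0 := by exact_mod_cast hDne
  set p : ℤ := p' / D with hp
  set q : ℤ := q' / D with hq
  have hpD : p * D = p' := Int.ediv_mul_cancel (Int.gcd_dvd_left p' q')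
  have hqD : q * D = q' := Int.ediv_mul_cancel (Int.gcd_dvd_right p' q')
  have hcop : IsCoprime p q := by
    rw [Int.isCoprime_iff_gcd_eq_one]
    exact Int.gcd_div_gcd_div_gcd hDpos
  obtain ⟨r, s, hrs⟩ := hcop
  refine ⟨QuotientGroup.mk ⟨!![p, -s; q, r], by
    rw [Matrix.det_fin_two_of]; linarith⟩, ?_⟩
  rw [ptInf]
  refine (psl_smul_mk _ _ _).trans ?_
  refine (Projectivization.mk_eq_mk_iff' ℚ _ _ _ _).2
    ⟨((x.den : ℚ) * (y.den : ℚ)) / (D : ℚ), ?_⟩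
  have hmv : ((!![p, -s; q, r] : Matrix (Fin 2) (Fin 2) ℤ).map
      (Int.cast : ℤ → ℚ)).mulVec ![1,0] = ![(p:ℚ), (q:ℚ)] := by
    funext i
    fin_cases i <;>
      simp [Matrix.mulVec, dotProduct, Fin.sum_univ_two, Matrix.map_apply]
  rw [hmv]
  have hxn : x * (x.den : ℚ) = (x.num : ℚ) := Rat.mul_den_eq_num x
  have hyn : y * (y.den : ℚ) = (y.num : ℚ) := Rat.mul_den_eq_num y
  have hpQ : (p : ℚ) * (D : ℚ) = (x.num : ℚ) * (y.den : ℚ) := by exact_mod_cast hpD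
  have hqQ : (q : ℚ) * (D : ℚ) = (y.num : ℚ) * (x.den : ℚ) := by exact_mod_cast hqD
  funext i
  fin_cases i
  · show ((x.den : ℚ) * (y.den : ℚ)) / (D : ℚ) * x = (p : ℚ)
    field_simp
    linear_combination (y.den : ℚ) * hxn - hpQ
  · show ((x.den : ℚ) * (y.den : ℚ)) / (D : ℚ) * y = (q : ℚ)
    field_simp
    linear_combination (x.den : ℚ) * hyn - hqQ

section Cocycle

variable {G N : Type*} [Group G] [Group N] [MulDistribMulAction G N]

lemma cocycle_one {u : G → N} (hu : IsCocycle u) : u 1 = 1 := by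
  have h := hu 1 1
  rw [mul_one, one_smul] at h
  have h2 : u 1 * 1 = u 1 * u 1 := by rw [mul_one]; exact h
  exact (mul_left_cancel h2).symm

lemma cocycle_inv {u : G → N} (hu : IsCocycle u) (g : G) :
    u g⁻¹ = g⁻¹ • (u g)⁻¹ := by
  have h := hu g g⁻¹
  rw [mul_inv_cancel, cocycle_one hu] at h
  have h2 : g • u g⁻¹ = (u g)⁻¹ := (inv_eq_of_mul_eq_one_right h.symm).symm
  calc u g⁻¹ = g⁻¹ • (g • u g⁻¹) := by rw [smul_smul, inv_mul_cancel, one_smul]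
    _ = g⁻¹ • (u g)⁻¹ := by rw [h2]

/-- The set of `g` where the cocycle twisted by `n` is trivial is a subgroup. -/
def trivSubgroup (u : G → N) (hu : IsCocycle u) (n : N) : Subgroup G where
  carrier := {g | u g = n⁻¹ * g • n}
  one_mem' := by simp [cocycle_one hu]
  mul_mem' := by
    intro a b ha hb
    show u (a * b) = n⁻¹ * (a * b) • n
    rw [hu a b, ha, hb, smul_mul', smul_inv', smul_smul]
    group
  inv_mem' := by
    intro a ha
    show u a⁻¹ = n⁻¹ * a⁻¹ • n
    rw [cocycle_inv hu, ha]
    simp only [_root_.mul_inv_rev, inv_inv, smul_mul', smul_inv', smul_smul,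
      inv_mul_cancel, one_smul]

lemma mem_trivSubgroup {u : G → N} (hu : IsCocycle u) (n : N) (g : G) :
    g ∈ trivSubgroup u hu n ↔ u g = n⁻¹ * g • n := Iff.rfl

lemma cocycle_conj {u : G → N} (hu : IsCocycle u) (n : N) (g k : G)
    (h : u (g⁻¹ * k * g) = n⁻¹ * (g⁻¹ * k * g) • n) :
    u k = (g • n * (u g)⁻¹)⁻¹ * k • (g • n * (u g)⁻¹) := by
  have hk : k = g * ((g⁻¹ * k * g) * g⁻¹) := by group
  conv_lhs => rw [hk]
  rw [hu, hu, h, cocycle_inv hu]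
  simp only [smul_mul', smul_inv', smul_smul, _root_.mul_inv_rev, inv_inv, mul_assoc,
    mul_inv_cancel_left, inv_mul_cancel_left, mul_inv_cancel, inv_mul_cancel,
    mul_one, one_mul, one_smul]

end Cocycle

theorem cuspidal_iff_of_sigma_one {N : Type*} [Group N]
    [MulDistribMulAction PSL2Z N]
    (u : PSL2Z → N) (hu : IsCocycle u) (huσ : u pslSigma = 1) :
    (∀ a : P1Q, ∃ n : N, ∀ k ∈ MulAction.stabilizer PSL2Z a, u k = n⁻¹ * k • n) ↔
    (∃ n : N, pslSigma • u pslTau = n⁻¹ * (pslSigma * pslTau) • n) := by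
  have hστ : u (pslSigma * pslTau) = pslSigma • u pslTau := by
    rw [hu pslSigma pslTau, huσ, one_mul]
  constructor
  · intro H
    obtain ⟨n, hn⟩ := H ptInf
    refine ⟨n, ?_⟩
    rw [← hστ]
    exact hn _ (MulAction.mem_stabilizer_iff.2 st_smul_ptInf)
  · rintro ⟨n, hn⟩ a
    obtain ⟨g, hg⟩ := exists_smul_ptInf a
    have hst : pslSigma * pslTau ∈ trivSubgroup u hu n := by
      rw [mem_trivSubgroup, hστ]
      exact hn
    have hstab : ∀ k : PSL2Z, k • ptInf = ptInf → u k = n⁻¹ * k • n := by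
      intro k hk
      obtain ⟨m, hm⟩ := stab_ptInf k hk
      rw [hm]
      exact zpow_mem hst m
    refine ⟨g • n * (u g)⁻¹, ?_⟩
    intro k hk
    have hk0 : k • a = a := MulAction.mem_stabilizer_iff.1 hk
    have hk' : (g⁻¹ * k * g) • ptInf = ptInf := by
      rw [mul_smul, mul_smul, hg, hk0, ← hg, inv_smul_smul]
    exact cocycle_conj hu n g k (hstab _ hk')
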